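/- arXiv:1509.04354 — 2 statements merged into one kernel-verified Lean document; each statement's English description precedes it below -/
import Mathlib

section
/- Let p be prime, χ a nontrivial multiplicative character of 𝔽_p (extended by χ(0)=0), and A, B, C ⊆ 𝔽_p finite sets. Then |∑_{a∈A} ∑_{b∈B} ∑_{c∈C} χ(a+b+c)| ≤ √(p · |A| · E₊(B,C)). -/
/-!
Grouping the pairs `(b, c)` by `x = b + c` writes the sum as `∑ₓ r(x) T(x)`, where
`r(x) = #{(b, c) ∈ B × C | b + c = x}` and `T(x) = ∑_{a ∈ A} χ(a + x)`. By Cauchy–Schwarz it is at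
most `√(∑ₓ r(x)²) · √(∑ₓ |T(x)|²)`; the first factor is `√E₊(B, C)`, and expanding `|T(x)|²` with
the orthogonality relation `∑ₓ χ(u + x) χ̄(v + x) = p·[u = v] - 1` gives
`∑ₓ |T(x)|² = |A| (p - |A|) ≤ p |A|`.
-/

open Finset
open scoped Combinatorics.Additive

namespace MulChar

variable {F R : Type*} [Field F] [Fintype F] [DecidableEq F] [CommRing R]

lemma sum_mul_inv_apply (χ : MulChar F R) : ∑ x, χ x * χ⁻¹ x = Fintype.card F - 1 := by
  simp only [← mul_apply, mul_inv_cancel, sum_one_eq_card_units,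
    Fintype.card_eq_card_units_add_one (α := F), Nat.cast_add, Nat.cast_one, add_sub_cancel_right]

variable [IsDomain R]

lemma sum_apply_add_mul_inv_apply_of_ne_zero {χ : MulChar F R} (hχ : χ ≠ 1) {d : F}
    (hd : d ≠ 0) : ∑ x, χ (d + x) * χ⁻¹ x = -1 := by
  -- `x ↦ 1 + d / x` permutes `F` and agrees with `x ↦ (d + x) / x` away from `x = 0`.
  let e : F ≃ F := (Equiv.inv F).trans ((Equiv.mulLeft₀ d hd).trans (Equiv.addLeft 1))
  have he : ∀ x, e x = 1 + d * x⁻¹ := fun _ ↦ rfl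
  have hterm : ∀ x ∈ univ.erase 0, χ (d + x) * χ⁻¹ x = χ (e x) := by
    intro x hx
    rw [he, inv_apply', ← map_mul]
    congr 1
    field_simp [ne_of_mem_erase hx]
    ring
  rw [← add_sum_erase _ _ (mem_univ 0), χ⁻¹.map_zero, mul_zero, zero_add, sum_congr rfl hterm,
    sum_erase_eq_sub (mem_univ 0), e.sum_comp, sum_eq_zero_of_ne_one hχ, he]
  simp

lemma sum_apply_add_mul_inv_apply_add {χ : MulChar F R} (hχ : χ ≠ 1) (u v : F) :
    ∑ x, χ (u + x) * χ⁻¹ (v + x) = (if u = v then (Fintype.card F : R) else 0) - 1 := by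
  have hshift : ∑ x, χ (u + x) * χ⁻¹ (v + x) = ∑ x, χ (u - v + x) * χ⁻¹ x :=
    Fintype.sum_equiv (Equiv.addLeft v) _ _ fun x ↦ by
      simp only [Equiv.coe_addLeft, ← add_assoc, sub_add_cancel]
  rw [hshift]
  split_ifs with huv
  · rw [huv, sub_self]
    simpa using sum_mul_inv_apply χ
  · rw [sum_apply_add_mul_inv_apply_of_ne_zero hχ (sub_ne_zero.mpr huv), zero_sub]

lemma sum_norm_sq_sum_apply_add {χ : MulChar F ℂ} (hχ : χ ≠ 1) (A : Finset F) :
    ∑ x, ‖∑ a ∈ A, χ (a + x)‖ ^ 2 = #A * (Fintype.card F - #A) := by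
  apply Complex.ofReal_injective
  push_cast
  calc ∑ x, (‖∑ a ∈ A, χ (a + x)‖ : ℂ) ^ 2
      = ∑ x, ∑ a ∈ A, ∑ a' ∈ A, χ (a + x) * χ⁻¹ (a' + x) := by
        refine sum_congr rfl fun x _ ↦ ?_
        rw [← Complex.mul_conj', map_sum, sum_mul_sum]
        simp only [starRingEnd_apply, star_apply']
    _ = ∑ a ∈ A, ∑ a' ∈ A, ((if a = a' then (Fintype.card F : ℂ) else 0) - 1) := by
        rw [sum_comm]
        refine sum_congr rfl fun a _ ↦ ?_
        rw [sum_comm]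
        exact sum_congr rfl fun a' _ ↦ sum_apply_add_mul_inv_apply_add hχ a a'
    _ = #A * (Fintype.card F - #A) := by
        simp [sum_sub_distrib, mul_sub]

end MulChar

lemma norm_sum_sum_add_le_sqrt_addEnergy_mul {G E : Type*} [Add G] [Fintype G] [DecidableEq G]
    [SeminormedAddCommGroup E] (f : G → E) (B C : Finset G) :
    ‖∑ b ∈ B, ∑ c ∈ C, f (b + c)‖ ≤ √(E[B, C] * ∑ x, ‖f x‖ ^ 2) := by
  set r : G → ℕ := fun x ↦ #{bc ∈ B ×ˢ C | bc.1 + bc.2 = x}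
  have hfiber : ∑ b ∈ B, ∑ c ∈ C, f (b + c) = ∑ x, r x • f x := by
    rw [← sum_product (f := fun bc ↦ f (bc.1 + bc.2)),
      ← sum_fiberwise_of_maps_to (g := fun bc ↦ bc.1 + bc.2) (fun _ _ ↦ mem_univ _)]
    refine sum_congr rfl fun x _ ↦ ?_
    have hx : ∀ bc ∈ {bc ∈ B ×ˢ C | bc.1 + bc.2 = x}, f (bc.1 + bc.2) = f x :=
      fun bc hbc ↦ congrArg f (mem_filter.1 hbc).2
    rw [sum_congr rfl hx, sum_const]
  calc ‖∑ b ∈ B, ∑ c ∈ C, f (b + c)‖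
      ≤ ∑ x, (r x : ℝ) * ‖f x‖ := by
        rw [hfiber]
        exact (norm_sum_le _ _).trans (sum_le_sum fun x _ ↦ norm_nsmul_le)
    _ ≤ √(∑ x, (r x : ℝ) ^ 2) * √(∑ x, ‖f x‖ ^ 2) := Real.sum_mul_le_sqrt_mul_sqrt _ _ _
    _ = √(E[B, C] * ∑ x, ‖f x‖ ^ 2) := by
        rw [← Real.sqrt_mul (sum_nonneg fun _ _ ↦ sq_nonneg _), addEnergy_eq_sum_sq]
        push_cast
        rfl

theorem ternary_char_sum_bound (p : ℕ) [Fact p.Prime]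
    (χ : MulChar (ZMod p) ℂ) (hχ : χ ≠ 1)
    (A B C : Finset (ZMod p)) :
    ‖∑ a ∈ A, ∑ b ∈ B, ∑ c ∈ C, χ (a + b + c)‖ ≤
      Real.sqrt (p * A.card * E[B, C]) := by
  have hreorder : ∑ a ∈ A, ∑ b ∈ B, ∑ c ∈ C, χ (a + b + c)
      = ∑ b ∈ B, ∑ c ∈ C, ∑ a ∈ A, χ (a + (b + c)) := by
    simp only [add_assoc]
    rw [sum_comm]
    exact sum_congr rfl fun b _ ↦ sum_comm
  have hmoment := MulChar.sum_norm_sq_sum_apply_add hχ A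
  rw [ZMod.card] at hmoment
  calc ‖∑ a ∈ A, ∑ b ∈ B, ∑ c ∈ C, χ (a + b + c)‖
      ≤ √(E[B, C] * ∑ x, ‖∑ a ∈ A, χ (a + x)‖ ^ 2) := by
        rw [hreorder]
        exact norm_sum_sum_add_le_sqrt_addEnergy_mul (fun x ↦ ∑ a ∈ A, χ (a + x)) B C
    _ ≤ √(E[B, C] * (p * #A)) := by
        rw [hmoment, mul_comm (#A : ℝ)]
        gcongr
        exact sub_le_self _ (Nat.cast_nonneg _)
    _ = √(p * A.card * E[B, C]) := by
        rw [mul_comm]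
end

section
/- Let p be prime and A, B ⊆ 𝔽_p each of size at least 2 such that every element of the sumset A + B is a nonzero quadratic residue mod p. Then |A|·|B| ≤ p. -/
/-!
For a nontrivial quadratic character `χ` of `𝔽_q`, the correlation
`∑ x, χ (x + b) * χ (x + b')` is a Jacobi sum in disguise and equals `q * [b = b'] - 1`. Hence
`f x = ∑ b ∈ B, χ (x + b)` has `∑ x, f x ^ 2 = |B| (q - |B|)`. If `χ (a + b) = 1` on `A + B`,
then `f = |B|` on `A`, so `|A| |B|² ≤ |B| (q - |B|)`, i.e. `|A| |B| + |B| ≤ q`. In `𝔽₂` the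
hypothesis only says that `B` misses `-A`, which already forces `|A| + |B| ≤ 2`.
-/

open Finset

namespace MulChar.IsQuadratic

variable {F R : Type*} [Field F] [Fintype F] [CommRing R] {χ : MulChar F R}

theorem sum_mul_self (hχ : χ.IsQuadratic) : ∑ x, χ x * χ x = Fintype.card F - 1 := by
  classical
  simp_rw [← MulChar.mul_apply, ← sq, hχ.sq_eq_one, MulChar.sum_one_eq_card_units,
    Fintype.card_eq_card_units_add_one (α := F), Nat.cast_add, Nat.cast_one, add_sub_cancel_right]

variable [IsDomain R]

theorem sum_mul_add_of_ne_zero (hχ : χ.IsQuadratic) (hχ1 : χ ≠ 1) {c : F} (hc : c ≠ 0) :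
    ∑ x, χ x * χ (x + c) = -1 := by
  classical
  have hJ := jacobiSum_nontrivial_inv hχ1
  rw [hχ.inv] at hJ
  have hc2 : χ c * χ c = 1 := by
    rw [← MulChar.mul_apply, ← sq, hχ.sq_eq_one, MulChar.one_apply (isUnit_iff_ne_zero.mpr hc)]
  have hm1 : χ (-1) * χ (-1) = 1 := by
    rw [← map_mul, neg_one_mul, neg_neg, map_one]
  -- substituting `x = -c * y` turns the sum into `χ (-1) * jacobiSum χ χ`
  calc ∑ x, χ x * χ (x + c) = ∑ y, χ (-c * y) * χ (-c * y + c) :=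
        (Fintype.sum_equiv (Equiv.mulLeft₀ (-c) (neg_ne_zero.mpr hc)) _ _ fun _ => rfl).symm
    _ = ∑ y, χ (-1) * (χ y * χ (1 - y)) := by
        refine sum_congr rfl fun y _ => ?_
        rw [show -c * y + c = c * (1 - y) by ring, show -c * y = -1 * c * y by ring,
          map_mul, map_mul, map_mul]
        linear_combination (χ (-1) * χ y * χ (1 - y)) * hc2
    _ = -1 := by
        rw [← mul_sum, ← jacobiSum, hJ]
        linear_combination -hm1

theorem sum_mul_shift [DecidableEq F] (hχ : χ.IsQuadratic) (hχ1 : χ ≠ 1) (b b' : F) :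
    ∑ x, χ (x + b) * χ (x + b') = (if b = b' then (Fintype.card F : R) else 0) - 1 := by
  rw [Fintype.sum_equiv (Equiv.addRight b) _ (fun y => χ y * χ (y + (b' - b)))
    fun x => by rw [Equiv.coe_addRight, add_add_sub_cancel]]
  split_ifs with hb
  · simp [hb, hχ.sum_mul_self]
  · rw [zero_sub]
    exact hχ.sum_mul_add_of_ne_zero hχ1 (sub_ne_zero.mpr (Ne.symm hb))

theorem sum_sq_sum_add [DecidableEq F] (hχ : χ.IsQuadratic) (hχ1 : χ ≠ 1) (B : Finset F) :
    ∑ x, (∑ b ∈ B, χ (x + b)) ^ 2 = #B * (Fintype.card F - #B) := by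
  simp_rw [sq, sum_mul_sum]
  rw [sum_comm, sum_congr rfl fun b _ => sum_comm]
  simp_rw [hχ.sum_mul_shift hχ1, sum_sub_distrib, sum_ite_eq, sum_const]
  rw [sum_congr rfl fun b hb => if_pos hb, sum_const, nsmul_eq_mul, nsmul_eq_mul, nsmul_eq_mul,
    mul_one]
  ring

theorem card_mul_card_add_card_le [DecidableEq F] {χ : MulChar F ℤ} (hχ : χ.IsQuadratic)
    (hχ1 : χ ≠ 1) {A B : Finset F} (h : ∀ a ∈ A, ∀ b ∈ B, χ (a + b) = 1) :
    #A * #B + #B ≤ Fintype.card F := by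
  have key : (#A * #B ^ 2 : ℤ) ≤ #B * (Fintype.card F - #B) :=
    calc (#A * #B ^ 2 : ℤ) = ∑ a ∈ A, (∑ b ∈ B, χ (a + b)) ^ 2 := by
          rw [sum_congr rfl fun a ha => by rw [sum_congr rfl (h a ha)]]
          simp
      _ ≤ ∑ x, (∑ b ∈ B, χ (x + b)) ^ 2 :=
          sum_le_sum_of_subset_of_nonneg (subset_univ A) fun _ _ _ => sq_nonneg _
      _ = #B * (Fintype.card F - #B) := hχ.sum_sq_sum_add hχ1 B
  rcases B.eq_empty_or_nonempty with rfl | hB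
  · simp
  · have : (0 : ℤ) < #B := by exact_mod_cast hB.card_pos
    have : (#A * #B + #B : ℤ) ≤ Fintype.card F := by nlinarith
    exact_mod_cast this

end MulChar.IsQuadratic

open scoped Pointwise in
theorem Finset.card_add_card_le_card_of_forall_add_ne_zero {G : Type*} [AddGroup G] [Fintype G]
    [DecidableEq G] {A B : Finset G} (h : ∀ a ∈ A, ∀ b ∈ B, a + b ≠ 0) :
    #A + #B ≤ Fintype.card G := by
  have hdisj : Disjoint (-A) B := by
    rw [disjoint_left]
    intro x hx hxB
    obtain ⟨a, ha, rfl⟩ := mem_neg.mp hx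
    exact h a ha (-a) hxB (add_neg_cancel a)
  rw [← card_neg A, ← card_union_of_disjoint hdisj]
  exact card_le_univ _

theorem sarkozy_sumset_bound_general (p : ℕ) [Fact p.Prime]
    (A B : Finset (ZMod p))
    (h : ∀ a ∈ A, ∀ b ∈ B, a + b ≠ 0 ∧ IsSquare (a + b)) :
    A.card * B.card ≤ p := by
  rcases eq_or_ne p 2 with rfl | hp
  · have := card_add_card_le_card_of_forall_add_ne_zero fun a ha b hb => (h a ha b hb).1
    rw [ZMod.card] at this
    nlinarith
  · have hχ1 : quadraticChar (ZMod p) ≠ 1 := quadraticChar_ne_one (by rwa [ZMod.ringChar_zmod_n])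
    have := (quadraticChar_isQuadratic (ZMod p)).card_mul_card_add_card_le hχ1 fun a ha b hb =>
      (quadraticChar_one_iff_isSquare (h a ha b hb).1).mpr (h a ha b hb).2
    rw [ZMod.card] at this
    omega

theorem sarkozy_sumset_bound (p : ℕ) [Fact p.Prime]
    (A B : Finset (ZMod p)) (hA : 2 ≤ A.card) (hB : 2 ≤ B.card)
    (h : ∀ a ∈ A, ∀ b ∈ B, a + b ≠ 0 ∧ IsSquare (a + b)) :
    A.card * B.card ≤ p :=
  sarkozy_sumset_bound_general p A B h
end
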